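/- If i : M₁ → N is a functor of groupoids and j : M₂ → N is an isofibration (every isomorphism j(b) ≅ n in N lifts to an isomorphism in M₂ with source b), then the strict pullback groupoid M₁ ×_N M₂ is equivalent to the iso-comma groupoid M₁ ×^h_N M₂. -/

import Mathlib

open CategoryTheory

/-- A functor of groupoids is an isofibration if every isomorphism out of the image of an
object lifts to an isomorphism out of that object. -/
def IsIsofibration {M₂ N : Type*} [Groupoid M₂] [Groupoid N] (j : M₂ ⥤ N) : Prop :=
  ∀ (b : M₂) (n : N) (φ : j.obj b ≅ n),
    ∃ (b' : M₂) (ψ : b ≅ b') (h : j.obj b' = n), j.map ψ.hom ≫ eqToHom h = φ.hom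

/-- The strict pullback of groupoids along `i` and `j`: the full subcategory of the
iso-comma groupoid `Comma i j` on the objects whose structure morphism is an identity,
i.e. pairs `(a, b)` with `i.obj a = j.obj b`.  The canonical functor to the iso-comma
groupoid sends `(a, b)` to `(a, b, id)`; it is the inclusion of this full subcategory. -/
def StrictPullback {M₁ M₂ N : Type*} [Groupoid M₁] [Groupoid M₂] [Groupoid N]
    (i : M₁ ⥤ N) (j : M₂ ⥤ N) : Type _ :=
  ObjectProperty.FullSubcategory (fun x : Comma i j => ∃ h : i.obj x.left = j.obj x.right, x.hom = eqToHom h)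

instance {M₁ M₂ N : Type*} [Groupoid M₁] [Groupoid M₂] [Groupoid N]
    (i : M₁ ⥤ N) (j : M₂ ⥤ N) : Category (StrictPullback i j) :=
  ObjectProperty.FullSubcategory.category _

lemma CategoryTheory.ObjectProperty.isEquivalence_ι_of_forall_isoClosure {C : Type*} [Category C]
    {P : ObjectProperty C} (hP : ∀ X, P.isoClosure X) : P.ι.IsEquivalence :=
  have : P.ι.EssSurj := ⟨fun X ↦
    let ⟨Y, hY, ⟨e⟩⟩ := hP X
    ⟨⟨Y, hY⟩, ⟨e.symm⟩⟩⟩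
  { }

/-- Lifting `x.hom⁻¹ : j b ≅ i a` along `j` to `ψ : b ≅ b'` moves `x = (a, b, x.hom)` to the
strict object `(a, b', id)`. -/
lemma IsIsofibration.isoClosure_strict {M₁ M₂ N : Type*} [Category M₁] [Groupoid M₂] [Groupoid N]
    {i : M₁ ⥤ N} {j : M₂ ⥤ N} (hj : IsIsofibration j) (x : Comma i j) :
    ObjectProperty.isoClosure
      (fun x : Comma i j => ∃ h : i.obj x.left = j.obj x.right, x.hom = eqToHom h) x := by
  obtain ⟨b', ψ, h, hψ⟩ := hj x.right (i.obj x.left) (asIso x.hom).symm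
  have hx : x.hom ≫ j.map ψ.hom = eqToHom h.symm := by
    rw [← cancel_mono (eqToHom h), Category.assoc, hψ]
    simp
  refine ⟨⟨x.left, b', eqToHom h.symm⟩, ⟨h.symm, rfl⟩, ⟨Comma.isoMk (Iso.refl _) ψ ?_⟩⟩
  simp [hx]

/-- If `j` is an isofibration of groupoids, the canonical functor from the strict pullback
to the iso-comma groupoid is an equivalence. -/
theorem strictPullback_equiv_isoComma_of_isofibration
    {M₁ M₂ N : Type*} [Groupoid M₁] [Groupoid M₂] [Groupoid N]
    (i : M₁ ⥤ N) (j : M₂ ⥤ N) (hj : IsIsofibration j) :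
    (ObjectProperty.ι
      (fun x : Comma i j => ∃ h : i.obj x.left = j.obj x.right, x.hom = eqToHom h)).IsEquivalence :=
  ObjectProperty.isEquivalence_ι_of_forall_isoClosure hj.isoClosure_strict
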